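/- Let T = (T_1, ..., T_d) be a commuting operator-valued multishift on ℓ²_H(N^d) with all operator weights equal to unitary operators on H, and suppose each T_j is a contraction. Then T satisfies von Neumann's inequality: ‖p(T)‖ ≤ sup_{z ∈ D^d} |p(z)| for all polynomials p in d variables. -/

import Mathlib

/-- The `j`-th standard unit multi-index in `ℕ^d`. -/
def unitIdx {d : ℕ} (j : Fin d) : Fin d → ℕ := fun i => if i = j then 1 else 0

/-- `T^α = T_1^{α_1} ⋯ T_d^{α_d}` for a (commuting) tuple in a possibly noncommutative ring. -/
noncomputable def tuplePow {d : ℕ} {R : Type*} [Monoid R] (T : Fin d → R) (α : Fin d →₀ ℕ) : R :=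
  (List.ofFn fun j => T j ^ α j).prod

/-- Evaluation `p(T) = Σ_α a_α T^α` of a polynomial on a tuple of operators. -/
noncomputable def polyEval {d : ℕ} {R : Type*} [Ring R] [Algebra ℂ R] (T : Fin d → R)
    (p : MvPolynomial (Fin d) ℂ) : R :=
  ∑ α ∈ p.support, MvPolynomial.coeff α p • tuplePow T α

/-- `sup_{z ∈ 𝔻^d} |p(z)|`, the supremum of `|p|` over the open unit polydisc. -/
noncomputable def polySup {d : ℕ} (p : MvPolynomial (Fin d) ℂ) : ℝ :=
  ⨆ z : {z : Fin d → ℂ // ∀ i, ‖z i‖ < 1}, ‖MvPolynomial.eval z.1 p‖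

/-!
The products of the weights along monotone lattice paths from `0` to `γ` do not depend on the
path, by the commutation relations, and they are unitary. The diagonal unitary
`U = ⊕_γ P_γ` built from them conjugates each `T_j` to `S_j ⊗ 1_H`, where `S` is the scalar
multishift on `ℓ²(ℕ^d)`, so `p(T)` is unitarily equivalent to `p(S) ⊗ 1_H`: convolution with the
coefficients of `p`. On a grid `{0, …, N - 1}^d` containing all supports involved, the discrete
Fourier transform at the `N`-th roots of unity is a multiple of an isometry (Parseval) and turns
this convolution into multiplication by the values of `p` at points of the torus, where `|p|` is
at most its supremum over the polydisc.
-/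

open Finset ComplexConjugate

lemma lp.norm_sq_eq_tsum {ι : Type*} {E : ι → Type*} [∀ i, NormedAddCommGroup (E i)]
    (f : lp E 2) : ‖f‖ ^ 2 = ∑' i, ‖f i‖ ^ 2 := by
  simpa using lp.norm_rpow_eq_tsum (p := 2) (by norm_num) f

lemma lp.summable_norm_sq {ι : Type*} {E : ι → Type*} [∀ i, NormedAddCommGroup (E i)]
    (f : lp E 2) : Summable fun i => ‖f i‖ ^ 2 := by
  simpa using (lp.memℓp f).summable (by norm_num)

lemma IsPrimitiveRoot.sum_pow_mul_conj {ζ : ℂ} {N : ℕ} (hζ : IsPrimitiveRoot ζ N) {a b : ℕ}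
    (ha : a < N) (hb : b < N) :
    ∑ m ∈ range N, (ζ ^ a) ^ m * conj ((ζ ^ b) ^ m) = if a = b then (N : ℂ) else 0 := by
  have hN : N ≠ 0 := by omega
  have hconj : conj ζ = ζ⁻¹ := (Complex.inv_eq_conj (hζ.norm'_eq_one hN)).symm
  have hζ0 : ζ ≠ 0 := hζ.ne_zero hN
  simp_rw [map_pow, hconj, ← mul_pow, inv_pow]
  split_ifs with hab
  · simp [hab, hζ0]
  · have hne : ζ ^ a * (ζ ^ b)⁻¹ ≠ 1 := fun h =>
      hab (hζ.pow_inj ha hb (mul_inv_eq_one₀ (pow_ne_zero _ hζ0) |>.1 h))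
    rw [geom_sum_eq hne, mul_pow, inv_pow, ← pow_mul, ← pow_mul, mul_comm a, mul_comm b, pow_mul,
      pow_mul, hζ.pow_eq_one, one_pow, one_pow, inv_one, mul_one, sub_self, zero_div]

namespace Multishift

variable {d : ℕ}

section MultiIndex

lemma unitIdx_le_iff {γ : Fin d → ℕ} {j : Fin d} : unitIdx j ≤ γ ↔ γ j ≠ 0 := by
  refine ⟨fun h => by simpa [unitIdx, Nat.one_le_iff_ne_zero] using h j, fun h i => ?_⟩
  simp only [unitIdx]
  split_ifs with hij
  · subst hij; omega
  · exact Nat.zero_le _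

lemma sum_add_unitIdx (γ : Fin d → ℕ) (j : Fin d) : ∑ i, (γ + unitIdx j) i = ∑ i, γ i + 1 := by
  simp [sum_add_distrib, unitIdx]

lemma sum_smul_unitIdx (α : Fin d → ℕ) : ∑ j, α j • unitIdx j = α := by
  ext i
  simp [unitIdx]

def grid (d N : ℕ) : Finset (Fin d → ℕ) := Fintype.piFinset fun _ => range N

lemma mem_grid {N : ℕ} {γ : Fin d → ℕ} : γ ∈ grid d N ↔ ∀ j, γ j < N := by
  simp [grid]

lemma exists_subset_grid (s : Finset (Fin d → ℕ)) : ∃ N, 0 < N ∧ s ⊆ grid d N := by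
  obtain ⟨c, hc⟩ := s.exists_le
  refine ⟨∑ j, c j + 1, Nat.succ_pos _, fun γ hγ => mem_grid.2 fun j => ?_⟩
  have := single_le_sum (fun i _ => Nat.zero_le (c i)) (mem_univ j)
  have : γ j ≤ c j := hc γ hγ j
  omega

lemma grid_mono {M N : ℕ} (h : M ≤ N) : grid d M ⊆ grid d N :=
  fun _ hγ => mem_grid.2 fun j => (mem_grid.1 hγ j).trans_le h

lemma mem_grid_of_le {N : ℕ} {γ δ : Fin d → ℕ} (h : δ ≤ γ) (hγ : γ ∈ grid d N) : δ ∈ grid d N :=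
  mem_grid.2 fun j => (h j).trans_lt (mem_grid.1 hγ j)

lemma add_mem_grid {M N : ℕ} {γ δ : Fin d → ℕ} (hγ : γ ∈ grid d M) (hδ : δ ∈ grid d N) :
    γ + δ ∈ grid d (M + N) :=
  mem_grid.2 fun j => Nat.add_lt_add (mem_grid.1 hγ j) (mem_grid.1 hδ j)

def multiPow (w : Fin d → ℂ) (δ : Fin d → ℕ) : ℂ := ∏ j, w j ^ δ j

lemma multiPow_add (w : Fin d → ℂ) (α δ : Fin d → ℕ) :
    multiPow w (α + δ) = multiPow w α * multiPow w δ := by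
  simp only [multiPow, Pi.add_apply, pow_add, prod_mul_distrib]

end MultiIndex

section PolySup

lemma polySup_bddAbove (p : MvPolynomial (Fin d) ℂ) :
    BddAbove (Set.range fun z : {z : Fin d → ℂ // ∀ i, ‖z i‖ < 1} =>
      ‖MvPolynomial.eval z.1 p‖) := by
  refine ⟨∑ α ∈ p.support, ‖p.coeff α‖, ?_⟩
  rintro _ ⟨z, rfl⟩
  show ‖MvPolynomial.eval z.1 p‖ ≤ _
  rw [MvPolynomial.eval_eq']
  refine (norm_sum_le _ _).trans (sum_le_sum fun α _ => ?_)
  rw [norm_mul, norm_prod]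
  refine mul_le_of_le_one_right (norm_nonneg _)
    (prod_le_one (fun _ _ => norm_nonneg _) fun j _ => ?_)
  rw [norm_pow]
  exact pow_le_one₀ (norm_nonneg _) (z.2 j).le

lemma le_polySup (p : MvPolynomial (Fin d) ℂ) {z : Fin d → ℂ} (hz : ∀ i, ‖z i‖ < 1) :
    ‖MvPolynomial.eval z p‖ ≤ polySup p :=
  le_ciSup (polySup_bddAbove p) ⟨z, hz⟩

lemma polySup_nonneg (p : MvPolynomial (Fin d) ℂ) : 0 ≤ polySup p :=
  (norm_nonneg _).trans (le_polySup p (z := 0) fun _ => by simp)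

/-- By continuity along the radius `r ↦ r • w` as `r → 1⁻`. -/
lemma norm_eval_le_polySup (p : MvPolynomial (Fin d) ℂ) {w : Fin d → ℂ} (hw : ∀ j, ‖w j‖ ≤ 1) :
    ‖MvPolynomial.eval w p‖ ≤ polySup p := by
  have hcont : Continuous fun r : ℝ => ‖MvPolynomial.eval (fun j => (r : ℂ) * w j) p‖ :=
    (MvPolynomial.continuous_eval p |>.comp (by fun_prop)).norm
  have hlim := (hcont.tendsto 1).mono_left (nhdsWithin_le_nhds (s := Set.Iio 1))
  simp only [Complex.ofReal_one, one_mul] at hlim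
  refine le_of_tendsto hlim (Filter.eventually_of_mem (Ioo_mem_nhdsLT zero_lt_one) fun r hr => ?_)
  refine le_polySup p fun j => ?_
  rw [norm_mul, Complex.norm_real, Real.norm_of_nonneg hr.1.le]
  exact (mul_le_of_le_one_right hr.1.le (hw j)).trans_lt hr.2

end PolySup

section Fourier

variable {H : Type*} [NormedAddCommGroup H] [InnerProductSpace ℂ H]

/-- The point `(ζ ^ k₁, …, ζ ^ k_d)` of the torus, with `ζ = exp (2πi / N)`. -/
noncomputable def rootPt (N : ℕ) (k : Fin d → ℕ) : Fin d → ℂ :=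
  fun j => Complex.exp (2 * Real.pi * Complex.I / N) ^ k j

lemma norm_rootPt {N : ℕ} (hN : N ≠ 0) (k : Fin d → ℕ) (j : Fin d) : ‖rootPt N k j‖ = 1 := by
  rw [rootPt, norm_pow, (Complex.isPrimitiveRoot_exp N hN).norm'_eq_one hN, one_pow]

/-- Orthogonality of the characters `δ ↦ (rootPt N k) ^ δ` of `(ℤ / N)^d`. -/
lemma sum_grid_multiPow_mul_conj {N : ℕ} (hN : N ≠ 0) {δ δ' : Fin d → ℕ} (hδ : δ ∈ grid d N)
    (hδ' : δ' ∈ grid d N) :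
    ∑ k ∈ grid d N, multiPow (rootPt N k) δ * conj (multiPow (rootPt N k) δ') =
      if δ = δ' then (N : ℂ) ^ d else 0 := by
  set ζ := Complex.exp (2 * Real.pi * Complex.I / N)
  have hterm : ∀ k : Fin d → ℕ, multiPow (rootPt N k) δ * conj (multiPow (rootPt N k) δ') =
      ∏ j, (ζ ^ δ j) ^ k j * conj ((ζ ^ δ' j) ^ k j) := fun k => by
    simp only [multiPow, rootPt, map_prod, ← prod_mul_distrib, ← pow_mul, mul_comm (k _)]
    rfl
  simp_rw [hterm, grid]
  rw [← prod_univ_sum (fun _ => range N) fun j m => (ζ ^ δ j) ^ m * conj ((ζ ^ δ' j) ^ m)]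
  rw [prod_congr rfl fun j _ => (Complex.isPrimitiveRoot_exp N hN).sum_pow_mul_conj
    (mem_grid.1 hδ j) (mem_grid.1 hδ' j), prod_ite_zero]
  simp [funext_iff]

lemma sum_grid_norm_sq_fourier {N : ℕ} (hN : N ≠ 0) {F : Finset (Fin d → ℕ)} (hF : F ⊆ grid d N)
    (u : (Fin d → ℕ) → H) :
    ∑ k ∈ grid d N, ‖∑ δ ∈ F, multiPow (rootPt N k) δ • u δ‖ ^ 2 =
      N ^ d * ∑ δ ∈ F, ‖u δ‖ ^ 2 := by
  have key : ∑ k ∈ grid d N, inner ℂ (∑ δ ∈ F, multiPow (rootPt N k) δ • u δ)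
      (∑ δ ∈ F, multiPow (rootPt N k) δ • u δ) =
        ((N ^ d : ℝ) : ℂ) * ∑ δ ∈ F, inner ℂ (u δ) (u δ) := by
    simp_rw [sum_inner, inner_sum, inner_smul_left, inner_smul_right, ← mul_assoc]
    rw [sum_comm, mul_sum]
    refine sum_congr rfl fun δ hδ => ?_
    rw [sum_comm]
    calc _ = ∑ y ∈ F, (∑ k ∈ grid d N, multiPow (rootPt N k) y *
          conj (multiPow (rootPt N k) δ)) * inner ℂ (u δ) (u y) := by
          simp_rw [sum_mul, mul_comm (conj _)]
      _ = _ := by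
          rw [sum_congr rfl fun y hy => by rw [sum_grid_multiPow_mul_conj hN (hF hy) (hF hδ)]]
          simp [hδ]
  simp_rw [← inner_self_eq_norm_sq (𝕜 := ℂ)]
  simp only [RCLike.re_to_complex]
  rw [← Complex.re_sum, key, Complex.re_ofReal_mul, Complex.re_sum]

end Fourier

section Convolution

variable {H : Type*} [AddCommMonoid H]

open Classical in
/-- `shiftBy β` is `S^β ⊗ 1_H` for the scalar multishift `S` on `ℓ²(ℕ^d)`. -/
noncomputable def shiftBy (β : Fin d → ℕ) (y : (Fin d → ℕ) → H) (γ : Fin d → ℕ) : H :=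
  if β ≤ γ then y (γ - β) else 0

lemma shiftBy_apply_add (β : Fin d → ℕ) (y : (Fin d → ℕ) → H) (γ : Fin d → ℕ) :
    shiftBy β y (γ + β) = y γ := by
  simp [shiftBy]

lemma shiftBy_zero (y : (Fin d → ℕ) → H) : shiftBy 0 y = y := by
  ext γ
  simp [shiftBy]

lemma shiftBy_shiftBy (β β' : Fin d → ℕ) (y : (Fin d → ℕ) → H) :
    shiftBy β (shiftBy β' y) = shiftBy (β + β') y := by
  ext γ
  simp only [shiftBy]
  split_ifs with h₁ h₂ h₃ h₃ h₃
  · rw [tsub_tsub]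
  · exact absurd ((le_tsub_iff_left h₁).1 h₂) h₃
  · exact absurd ((le_tsub_iff_left h₁).2 h₃) h₂
  · rfl
  · exact absurd (le_self_add.trans h₃) h₁
  · rfl

lemma shiftBy_congr {β γ : Fin d → ℕ} {y y' : (Fin d → ℕ) → H} (h : ∀ δ ≤ γ, y δ = y' δ) :
    shiftBy β y γ = shiftBy β y' γ := by
  simp only [shiftBy]
  split_ifs
  · exact h _ tsub_le_self
  · rfl

lemma sum_smul_shiftBy [Module ℂ H] {β : Fin d → ℕ} {y : (Fin d → ℕ) → H} {F G : Finset (Fin d → ℕ)}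
    (hy : ∀ δ ∉ F, y δ = 0) (hG : ∀ δ ∈ F, δ + β ∈ G) (f : (Fin d → ℕ) → ℂ) :
    ∑ γ ∈ G, f γ • shiftBy β y γ = ∑ δ ∈ F, f (δ + β) • y δ := by
  rw [← sum_subset (image_subset_iff.2 hG), sum_image (add_left_injective β).injOn]
  · simp only [shiftBy_apply_add]
  intro γ _ hγ
  simp only [shiftBy]
  split_ifs with h
  · rw [hy _ fun hF => hγ (mem_image.2 ⟨_, hF, tsub_add_cancel_of_le h⟩), smul_zero]
  · rw [smul_zero]

variable [Module ℂ H]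

/-- `convolve p` is `p(S) ⊗ 1_H` for the scalar multishift `S` on `ℓ²(ℕ^d)`. -/
noncomputable def convolve (p : MvPolynomial (Fin d) ℂ) (y : (Fin d → ℕ) → H) (γ : Fin d → ℕ) : H :=
  ∑ α ∈ p.support, p.coeff α • shiftBy α y γ

lemma convolve_congr (p : MvPolynomial (Fin d) ℂ) {γ : Fin d → ℕ} {y y' : (Fin d → ℕ) → H}
    (h : ∀ δ ≤ γ, y δ = y' δ) : convolve p y γ = convolve p y' γ :=
  sum_congr rfl fun _ _ => by rw [shiftBy_congr h]

/-- The Fourier transform turns `convolve p` into multiplication by `p`. -/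
lemma sum_smul_convolve (p : MvPolynomial (Fin d) ℂ) {y : (Fin d → ℕ) → H}
    {F G : Finset (Fin d → ℕ)} (hy : ∀ δ ∉ F, y δ = 0) (hG : ∀ α ∈ p.support, ∀ δ ∈ F, δ + α ∈ G)
    (w : Fin d → ℂ) :
    ∑ γ ∈ G, multiPow w γ • convolve p y γ =
      MvPolynomial.eval w p • ∑ δ ∈ F, multiPow w δ • y δ := by
  conv_lhs => simp only [convolve, smul_sum, smul_comm (multiPow w _)]
  rw [sum_comm, MvPolynomial.eval_eq', sum_smul]
  refine sum_congr rfl fun α hα => ?_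
  rw [← smul_sum, sum_smul_shiftBy hy (hG α hα), smul_sum, smul_sum]
  refine sum_congr rfl fun δ _ => ?_
  rw [multiPow_add, smul_smul, smul_smul, mul_comm (multiPow w δ), ← mul_assoc]
  rfl

end Convolution

section Estimate

variable {H : Type*} [NormedAddCommGroup H] [InnerProductSpace ℂ H]

lemma sum_grid_norm_sq_convolve_le (p : MvPolynomial (Fin d) ℂ) {N : ℕ} (hN : N ≠ 0)
    {y : (Fin d → ℕ) → H} {F : Finset (Fin d → ℕ)} (hy : ∀ δ ∉ F, y δ = 0) (hF : F ⊆ grid d N)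
    (hG : ∀ α ∈ p.support, ∀ δ ∈ F, δ + α ∈ grid d N) :
    ∑ γ ∈ grid d N, ‖convolve p y γ‖ ^ 2 ≤ polySup p ^ 2 * ∑ δ ∈ F, ‖y δ‖ ^ 2 := by
  refine le_of_mul_le_mul_left ?_ (by positivity : (0 : ℝ) < N ^ d)
  calc (N : ℝ) ^ d * ∑ γ ∈ grid d N, ‖convolve p y γ‖ ^ 2
      = ∑ k ∈ grid d N, ‖MvPolynomial.eval (rootPt N k) p‖ ^ 2 *
          ‖∑ δ ∈ F, multiPow (rootPt N k) δ • y δ‖ ^ 2 := by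
        simp_rw [← sum_grid_norm_sq_fourier hN subset_rfl, sum_smul_convolve p hy hG, norm_smul,
          mul_pow]
    _ ≤ ∑ k ∈ grid d N, polySup p ^ 2 * ‖∑ δ ∈ F, multiPow (rootPt N k) δ • y δ‖ ^ 2 := by
        gcongr
        exact norm_eval_le_polySup p fun j => (norm_rootPt hN _ j).le
    _ = N ^ d * (polySup p ^ 2 * ∑ δ ∈ F, ‖y δ‖ ^ 2) := by
        rw [← mul_sum, sum_grid_norm_sq_fourier hN hF]
        ring

lemma tsum_norm_sq_convolve_le (p : MvPolynomial (Fin d) ℂ) {y : (Fin d → ℕ) → H}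
    (hy : Summable fun δ => ‖y δ‖ ^ 2) :
    ∑' γ, ‖convolve p y γ‖ ^ 2 ≤ polySup p ^ 2 * ∑' δ, ‖y δ‖ ^ 2 := by
  refine Real.tsum_le_of_sum_le (fun _ => by positivity) fun G => ?_
  obtain ⟨N, hN, hsub⟩ := exists_subset_grid (G ∪ p.support.image (⇑))
  set y' := (grid d N : Set (Fin d → ℕ)).indicator y with hy'
  have hGN : G ⊆ grid d N := subset_union_left.trans hsub
  calc ∑ γ ∈ G, ‖convolve p y γ‖ ^ 2 = ∑ γ ∈ G, ‖convolve p y' γ‖ ^ 2 :=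
        sum_congr rfl fun γ hγ => by
          rw [convolve_congr p fun δ hδ =>
            (Set.indicator_of_mem (mem_grid_of_le hδ (hGN hγ)) y).symm]
    _ ≤ ∑ γ ∈ grid d (N + N), ‖convolve p y' γ‖ ^ 2 :=
        sum_le_sum_of_subset_of_nonneg (hGN.trans (grid_mono le_add_self)) fun _ _ _ =>
          by positivity
    _ ≤ polySup p ^ 2 * ∑ δ ∈ grid d N, ‖y' δ‖ ^ 2 := by
        refine sum_grid_norm_sq_convolve_le p (by omega) (fun δ hδ => Set.indicator_of_notMem hδ y)
          (grid_mono le_add_self) fun α hα δ hδ => ?_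
        rw [add_comm N]
        exact add_mem_grid hδ (hsub (mem_union_right _ (mem_image_of_mem _ hα)))
    _ ≤ polySup p ^ 2 * ∑' δ, ‖y δ‖ ^ 2 := by
        gcongr
        calc ∑ δ ∈ grid d N, ‖y' δ‖ ^ 2 = ∑ δ ∈ grid d N, ‖y δ‖ ^ 2 :=
              sum_congr rfl fun δ hδ => by rw [hy', Set.indicator_of_mem hδ y]
          _ ≤ ∑' δ, ‖y δ‖ ^ 2 := hy.sum_le_tsum _ fun _ _ => by positivity

end Estimate

section PathWeight

variable {H : Type*} [NormedAddCommGroup H] [InnerProductSpace ℂ H]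

/-- The product of the weights along a monotone lattice path from `0` to `γ`; by the commutation
relations it does not depend on the path (`pathWeight_add_unitIdx`). -/
noncomputable def pathWeight (A : Fin d → (Fin d → ℕ) → (H →L[ℂ] H)) (γ : Fin d → ℕ) : H →L[ℂ] H :=
  if h : ∃ j, γ j ≠ 0 then
    A h.choose (γ - unitIdx h.choose) ∘L pathWeight A (γ - unitIdx h.choose)
  else 1
termination_by ∑ j, γ j
decreasing_by
  have := sum_add_unitIdx (γ - unitIdx h.choose) h.choose
  rw [tsub_add_cancel_of_le (unitIdx_le_iff.2 h.choose_spec)] at this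
  omega

variable {A : Fin d → (Fin d → ℕ) → (H →L[ℂ] H)}

lemma pathWeight_add_unitIdx
    (hAc : ∀ i j α, (A i (α + unitIdx j)).comp (A j α) = (A j (α + unitIdx i)).comp (A i α))
    (γ : Fin d → ℕ) (j : Fin d) :
    pathWeight A (γ + unitIdx j) = A j γ ∘L pathWeight A γ := by
  obtain ⟨n, hn⟩ : ∃ n, ∑ i, γ i = n := ⟨_, rfl⟩
  induction n using Nat.strong_induction_on generalizing γ j with
  | _ n ih =>
  have hex : ∃ i, (γ + unitIdx j) i ≠ 0 := ⟨j, by simp [unitIdx]⟩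
  rw [pathWeight, dif_pos hex]
  have hi := hex.choose_spec
  generalize hex.choose = i at hi ⊢
  clear hex
  by_cases hij : i = j
  · rw [hij, add_tsub_cancel_right]
  have hγi : γ i ≠ 0 := by simpa [unitIdx, hij] using hi
  obtain ⟨β, rfl⟩ : ∃ β, γ = β + unitIdx i :=
    ⟨γ - unitIdx i, (tsub_add_cancel_of_le (unitIdx_le_iff.2 hγi)).symm⟩
  have hβ : ∑ k, β k < n := by rw [← hn, sum_add_unitIdx]; omega
  rw [add_right_comm, add_tsub_cancel_right, ih _ hβ β j rfl, ih _ hβ β i rfl,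
    ← ContinuousLinearMap.comp_assoc, ← ContinuousLinearMap.comp_assoc, hAc]

lemma pathWeight_mem_unitary [CompleteSpace H] (hAu : ∀ j α, A j α ∈ unitary (H →L[ℂ] H))
    (γ : Fin d → ℕ) : pathWeight A γ ∈ unitary (H →L[ℂ] H) := by
  fun_induction pathWeight A γ with
  | case1 γ h ih => exact mul_mem (hAu _ _) ih
  | case2 => exact one_mem _

end PathWeight

section TwistedShift

variable {H : Type*} [NormedAddCommGroup H] [InnerProductSpace ℂ H] [CompleteSpace H]
  {A : Fin d → (Fin d → ℕ) → (H →L[ℂ] H)}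

local notation "𝓛" => lp (fun _ : Fin d → ℕ => H) 2

noncomputable def untwist (A : Fin d → (Fin d → ℕ) → (H →L[ℂ] H)) (x : (Fin d → ℕ) → H)
    (δ : Fin d → ℕ) : H :=
  star (pathWeight A δ) (x δ)

lemma apply_untwist (hAu : ∀ j α, A j α ∈ unitary (H →L[ℂ] H)) (x : (Fin d → ℕ) → H)
    (γ : Fin d → ℕ) : pathWeight A γ (untwist A x γ) = x γ :=
  congr($(Unitary.mul_star_self_of_mem (pathWeight_mem_unitary hAu γ)) (x γ))

lemma untwist_apply (hAu : ∀ j α, A j α ∈ unitary (H →L[ℂ] H)) (y : (Fin d → ℕ) → H)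
    (γ : Fin d → ℕ) : untwist A (fun δ => pathWeight A δ (y δ)) γ = y γ :=
  congr($(Unitary.star_mul_self_of_mem (pathWeight_mem_unitary hAu γ)) (y γ))

/-- `B = U (S^β ⊗ 1_H) U*` for the diagonal unitary `U = ⊕_γ pathWeight A γ`. -/
def IsTwistedShift (A : Fin d → (Fin d → ℕ) → (H →L[ℂ] H)) (B : 𝓛 →L[ℂ] 𝓛) (β : Fin d → ℕ) :
    Prop :=
  ∀ x γ, B x γ = pathWeight A γ (shiftBy β (untwist A x) γ)

variable (hAu : ∀ j α, A j α ∈ unitary (H →L[ℂ] H))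
include hAu

lemma isTwistedShift_one : IsTwistedShift A (1 : 𝓛 →L[ℂ] 𝓛) 0 := fun x γ => by
  rw [shiftBy_zero, apply_untwist hAu]
  rfl

lemma IsTwistedShift.mul {B C : 𝓛 →L[ℂ] 𝓛} {β β' : Fin d → ℕ} (hB : IsTwistedShift A B β)
    (hC : IsTwistedShift A C β') : IsTwistedShift A (B * C) (β + β') := fun x γ => by
  have : untwist A (C x) = shiftBy β' (untwist A x) := funext fun δ => by
    simp_rw [untwist, hC x]
    exact untwist_apply hAu _ δ
  rw [mul_apply_eq_comp, hB, this, shiftBy_shiftBy]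

lemma IsTwistedShift.pow {B : 𝓛 →L[ℂ] 𝓛} {β : Fin d → ℕ} (hB : IsTwistedShift A B β) (n : ℕ) :
    IsTwistedShift A (B ^ n) (n • β) := by
  induction n with
  | zero => simpa using isTwistedShift_one hAu
  | succ n ih =>
    rw [pow_succ, succ_nsmul]
    exact ih.mul hAu hB

lemma isTwistedShift_ofFn_prod {m : ℕ} {B : Fin m → 𝓛 →L[ℂ] 𝓛} {β : Fin m → Fin d → ℕ}
    (h : ∀ i, IsTwistedShift A (B i) (β i)) : IsTwistedShift A (List.ofFn B).prod (∑ i, β i) := by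
  induction m with
  | zero => simpa using isTwistedShift_one hAu
  | succ m ih =>
    rw [List.ofFn_succ, List.prod_cons, Fin.sum_univ_succ]
    exact (h 0).mul hAu (ih fun i => h i.succ)

variable (hAc : ∀ i j α, (A i (α + unitIdx j)).comp (A j α) = (A j (α + unitIdx i)).comp (A i α))
  {T : Fin d → (lp (fun _ : Fin d → ℕ => H) 2 →L[ℂ] lp (fun _ : Fin d → ℕ => H) 2)}
  (hT : ∀ j x, (∀ α, (T j x) (α + unitIdx j) = A j α (x α)) ∧ (∀ α, α j = 0 → (T j x) α = 0))
include hAc hT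

lemma isTwistedShift_multishift (j : Fin d) : IsTwistedShift A (T j) (unitIdx j) := fun x γ => by
  by_cases hγ : γ j = 0
  · rw [(hT j x).2 γ hγ, shiftBy, if_neg (unitIdx_le_iff.not.2 (not_not.2 hγ)), map_zero]
  obtain ⟨β, rfl⟩ : ∃ β, γ = β + unitIdx j :=
    ⟨γ - unitIdx j, (tsub_add_cancel_of_le (unitIdx_le_iff.2 hγ)).symm⟩
  rw [(hT j x).1, shiftBy_apply_add, pathWeight_add_unitIdx hAc, ContinuousLinearMap.comp_apply,
    apply_untwist hAu]

lemma isTwistedShift_tuplePow (α : Fin d →₀ ℕ) : IsTwistedShift A (tuplePow T α) α := by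
  have := isTwistedShift_ofFn_prod hAu fun j =>
    (isTwistedShift_multishift hAu hAc hT j).pow hAu (α j)
  rwa [sum_smul_unitIdx] at this

lemma polyEval_apply (p : MvPolynomial (Fin d) ℂ) (x : 𝓛) (γ : Fin d → ℕ) :
    polyEval T p x γ = pathWeight A γ (convolve p (untwist A x) γ) := by
  simp only [polyEval, convolve, _root_.sum_apply, lp.coeFn_sum, Finset.sum_apply, smul_apply,
    lp.coeFn_smul, Pi.smul_apply, map_sum, map_smul]
  exact sum_congr rfl fun α _ => by rw [isTwistedShift_tuplePow hAu hAc hT α x γ]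

end TwistedShift

end Multishift

open Multishift in
theorem multishift_unitary_weights_vN_general {d : ℕ} (H : Type*)
    [NormedAddCommGroup H] [InnerProductSpace ℂ H] [CompleteSpace H]
    (A : Fin d → (Fin d → ℕ) → (H →L[ℂ] H))
    (hAu : ∀ j α, A j α ∈ unitary (H →L[ℂ] H))
    (hAc : ∀ i j α, (A i (α + unitIdx j)).comp (A j α) = (A j (α + unitIdx i)).comp (A i α))
    (T : Fin d → (lp (fun _ : Fin d → ℕ => H) 2 →L[ℂ] lp (fun _ : Fin d → ℕ => H) 2))
    (hT : ∀ j x, (∀ α, (T j x) (α + unitIdx j) = A j α (x α)) ∧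
        (∀ α, α j = 0 → (T j x) α = 0)) :
    ∀ p : MvPolynomial (Fin d) ℂ, ‖polyEval T p‖ ≤ polySup p := by
  intro p
  refine ContinuousLinearMap.opNorm_le_bound _ (polySup_nonneg p) fun x => ?_
  have hU := pathWeight_mem_unitary hAu
  have hy γ : ‖untwist A x γ‖ = ‖x γ‖ :=
    ContinuousLinearMap.norm_map_of_mem_unitary (Unitary.star_mem (hU γ)) _
  have hpx γ : ‖polyEval T p x γ‖ = ‖convolve p (untwist A x) γ‖ := by
    rw [polyEval_apply hAu hAc hT, ContinuousLinearMap.norm_map_of_mem_unitary (hU γ)]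
  refine (pow_le_pow_iff_left₀ (norm_nonneg _)
    (mul_nonneg (polySup_nonneg p) (norm_nonneg x)) two_ne_zero).1 ?_
  rw [mul_pow, lp.norm_sq_eq_tsum, lp.norm_sq_eq_tsum]
  simp_rw [hpx, ← hy]
  exact tsum_norm_sq_convolve_le p (by simpa only [hy] using lp.summable_norm_sq x)

/-- A commuting contractive operator-valued multishift on `ℓ²_H(ℕ^d)` whose
operator weights are all unitary satisfies von Neumann's inequality. -/
theorem multishift_unitary_weights_vN {d : ℕ} (H : Type*)
    [NormedAddCommGroup H] [InnerProductSpace ℂ H] [CompleteSpace H]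
    (A : Fin d → (Fin d → ℕ) → (H →L[ℂ] H))
    (hAu : ∀ j α, A j α ∈ unitary (H →L[ℂ] H))
    (hAc : ∀ i j α, (A i (α + unitIdx j)).comp (A j α) = (A j (α + unitIdx i)).comp (A i α))
    (T : Fin d → (lp (fun _ : Fin d → ℕ => H) 2 →L[ℂ] lp (fun _ : Fin d → ℕ => H) 2))
    (hT : ∀ j x, (∀ α, (T j x) (α + unitIdx j) = A j α (x α)) ∧
        (∀ α, α j = 0 → (T j x) α = 0))
    (hcontr : ∀ j, ‖T j‖ ≤ 1) :
    ∀ p : MvPolynomial (Fin d) ℂ, ‖polyEval T p‖ ≤ polySup p :=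
  multishift_unitary_weights_vN_general H A hAu hAc T hT
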